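/- Let G be a group acting transitively on a set X, and suppose the stabilizer G_x of every (equivalently, some) point x ∈ X is finite, or of finite index in G, or normal in G. Then every G-equivariant transformation of X is bijective: End_G(X) = Aut_G(X). -/

import Mathlib

/-- The monoid of all `G`-equivariant transformations of `X`, as a submonoid of
`Function.End X` (composition of functions). -/
def gEnd (G X : Type*) [Group G] [MulAction G X] : Submonoid (Function.End X) where
  carrier := {f | ∀ (g : G) (x : X), f (g • x) = g • f x}
  one_mem' := fun _ _ => rfl
  mul_mem' := fun {f₁ f₂} h₁ h₂ g x => by
    show f₁ (f₂ (g • x)) = g • f₁ (f₂ x)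
    rw [h₂, h₁]

/-- The group of all bijective `G`-equivariant transformations of `X`, as a subgroup of
`Equiv.Perm X`. -/
def gAut (G X : Type*) [Group G] [MulAction G X] : Subgroup (Equiv.Perm X) where
  carrier := {f | ∀ (g : G) (x : X), f (g • x) = g • f x}
  one_mem' := fun _ _ => rfl
  mul_mem' := fun {f₁ f₂} h₁ h₂ g x => by
    show f₁ (f₂ (g • x)) = g • f₁ (f₂ x)
    rw [h₂, h₁]
  inv_mem' := fun {f} hf g x => f.injective (by
    rw [hf]; simp)

/-! An equivariant `τ` maps `x` to some `g • x`, so `G_x ≤ G_{τ x} = g G_x g⁻¹`. Each of the three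
hypotheses forbids a subgroup to sit properly inside one of its conjugates, hence `G_{τ x} = G_x`;
injectivity follows, and surjectivity is just transitivity. -/

namespace Subgroup

variable {G : Type*} [Group G] {H : Subgroup G} {g : G}

theorem map_conj_eq_of_le_of_finite [Finite H] (hle : H ≤ H.map (MulAut.conj g).toMonoidHom) :
    H.map (MulAut.conj g).toMonoidHom = H :=
  have : Finite (H.map (MulAut.conj g).toMonoidHom) :=
    Finite.of_equiv H (equivMapOfInjective H _ (MulAut.conj g).injective).toEquiv
  (eq_of_le_of_card_ge hle (card_map_of_injective (MulAut.conj g).injective).le).symm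

theorem map_conj_eq_of_le_of_finiteIndex [H.FiniteIndex]
    (hle : H ≤ H.map (MulAut.conj g).toMonoidHom) :
    H.map (MulAut.conj g).toMonoidHom = H := by
  by_contra hne
  exact (index_map_equiv H (MulAut.conj g)).not_lt (index_strictAnti (hle.lt_of_ne' hne))

end Subgroup

namespace MulAction

variable {G X Y : Type*} [Group G] [MulAction G X] [MulAction G Y] {f : X → Y}

theorem stabilizer_le_stabilizer_apply (hf : ∀ (g : G) (x : X), f (g • x) = g • f x) (x : X) :
    stabilizer G x ≤ stabilizer G (f x) := fun g hg => by
  rw [mem_stabilizer_iff, ← hf, mem_stabilizer_iff.mp hg]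

theorem injective_of_stabilizer_apply_le [IsPretransitive G X]
    (hf : ∀ (g : G) (x : X), f (g • x) = g • f x) (x : X)
    (hle : stabilizer G (f x) ≤ stabilizer G x) : Function.Injective f := by
  intro a b hab
  obtain ⟨g, rfl⟩ := exists_smul_eq G x a
  obtain ⟨k, rfl⟩ := exists_smul_eq G x b
  have hmem : k⁻¹ * g ∈ stabilizer G (f x) := by
    rw [mem_stabilizer_iff, mul_smul, ← hf, hab, hf, inv_smul_smul]
  rw [← inv_smul_eq_iff, ← mul_smul]
  exact hle hmem

theorem surjective_of_equivariant [IsPretransitive G Y]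
    (hf : ∀ (g : G) (x : X), f (g • x) = g • f x) (x : X) : Function.Surjective f := fun y => by
  obtain ⟨g, rfl⟩ := exists_smul_eq G (f x) y
  exact ⟨g • x, hf g x⟩

end MulAction

open MulAction in
/-- For a transitive action whose point stabilizer is finite, of finite
index, or normal, every `G`-equivariant transformation of `X` is bijective. -/
theorem stmt19 {G X : Type*} [Group G] [MulAction G X] [MulAction.IsPretransitive G X]
    (x : X)
    (h : Finite (MulAction.stabilizer G x) ∨ (MulAction.stabilizer G x).FiniteIndex ∨
      (MulAction.stabilizer G x).Normal) :
    ∀ τ ∈ gEnd G X, Function.Bijective τ := by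
  intro τ hτ
  obtain ⟨g, hg⟩ := exists_smul_eq G x (τ x)
  have hconj : stabilizer G (τ x) = (stabilizer G x).map (MulAut.conj g).toMonoidHom := by
    rw [← hg, stabilizer_smul_eq_stabilizer_map_conj]
  have hle : stabilizer G x ≤ (stabilizer G x).map (MulAut.conj g).toMonoidHom :=
    hconj ▸ stabilizer_le_stabilizer_apply hτ x
  have heq : stabilizer G (τ x) = stabilizer G x := by
    rw [hconj]
    rcases h with hfin | hindex | hnormal
    · exact Subgroup.map_conj_eq_of_le_of_finite hle
    · exact Subgroup.map_conj_eq_of_le_of_finiteIndex hle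
    · exact Subgroup.normal_iff_map_conj_eq.mp hnormal g
  exact ⟨injective_of_stabilizer_apply_le hτ x heq.le, surjective_of_equivariant hτ x⟩
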